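/- Let L > 0 and γ < 0, and set λ_n = (2πn/L)² for n ∈ ℤ, n ≠ 0. There is a constant C (depending on L and γ) such that for every sequence (v_n)_{n∈ℤ} of complex numbers with v_0 = 0 and ∑_{n≠0} λ_n^{1−2γ} |v_n|² < ∞, the sequence c_n = (π i n / L) ∑_{k∈ℤ} v_k v_{n−k} (the inner sum converging absolutely) satisfies ∑_{n≠0} λ_n^{−2γ} |c_n|² ≤ C (∑_{k≠0} λ_k^{1−2γ} |v_k|²)². -/
import Mathlib

open scoped ComplexConjugate

/-- Eigenvalue of `A = -d²/dξ²` on the `n`-th Fourier mode of a zero-mean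
`L`-periodic function. -/
noncomputable def ksEigen (L : ℝ) (n : ℤ) : ℝ := (2 * Real.pi * n / L) ^ 2

/-- `n`-th Fourier coefficient of the Kuramoto–Sivashinsky nonlinearity
`B(v,v) = v v' = ½(v²)'`: `c_n = (π i n / L) ∑_k v_k v_{n-k}`. -/
noncomputable def ksB (L : ℝ) (v : ℤ → ℂ) (n : ℤ) : ℂ :=
  (Real.pi : ℂ) * Complex.I * (n : ℂ) / (L : ℂ) * ∑' k : ℤ, v k * v (n - k)

private lemma rpow_sq_eq {x : ℝ} (hx : 0 ≤ x) (p : ℝ) : (x ^ p) ^ 2 = x ^ (p * 2) := by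
  rw [← Real.rpow_natCast (x ^ p) 2, ← Real.rpow_mul hx]
  norm_num

private lemma tsum_cs {f g : ℤ → ℝ} (hf : ∀ i, 0 ≤ f i) (hg : ∀ i, 0 ≤ g i)
    (hf2 : Summable fun i => f i ^ 2) (hg2 : Summable fun i => g i ^ 2) :
    Summable (fun i => f i * g i) ∧
      (∑' i, f i * g i) ^ 2 ≤ (∑' i, f i ^ 2) * ∑' i, g i ^ 2 := by
  set A := ∑' i, f i ^ 2 with hA'
  set B := ∑' i, g i ^ 2 with hB'
  have hA : 0 ≤ A := tsum_nonneg fun i => sq_nonneg _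
  have hB : 0 ≤ B := tsum_nonneg fun i => sq_nonneg _
  have key : ∀ t : Finset ℤ, ∑ i ∈ t, f i * g i ≤ Real.sqrt (A * B) := by
    intro t
    refine Real.le_sqrt_of_sq_le ?_
    calc (∑ i ∈ t, f i * g i) ^ 2 ≤ (∑ i ∈ t, f i ^ 2) * ∑ i ∈ t, g i ^ 2 :=
          Finset.sum_mul_sq_le_sq_mul_sq t f g
      _ ≤ A * B := mul_le_mul (Summable.sum_le_tsum t (fun i _ => sq_nonneg _) hf2)
          (Summable.sum_le_tsum t (fun i _ => sq_nonneg _) hg2)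
          (Finset.sum_nonneg fun i _ => sq_nonneg _) hA
  have hsum : Summable fun i => f i * g i :=
    summable_of_sum_le (fun i => mul_nonneg (hf i) (hg i)) key
  refine ⟨hsum, ?_⟩
  have hle := Summable.tsum_le_of_sum_le hsum key
  calc (∑' i, f i * g i) ^ 2 ≤ Real.sqrt (A * B) ^ 2 :=
        pow_le_pow_left₀ (tsum_nonneg fun i => mul_nonneg (hf i) (hg i)) hle 2
    _ = A * B := Real.sq_sqrt (mul_nonneg hA hB)

private lemma ksEigen_eq (L : ℝ) (n : ℤ) :
    ksEigen L n = (2 * Real.pi / L) ^ 2 * |(n : ℝ)| ^ 2 := by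
  unfold ksEigen; rw [sq_abs]; ring

private lemma ksEigen_nonneg (L : ℝ) (n : ℤ) : 0 ≤ ksEigen L n := sq_nonneg _

private lemma ksEigen_pos {L : ℝ} (hL : 0 < L) {n : ℤ} (hn : n ≠ 0) : 0 < ksEigen L n := by
  have h : 2 * Real.pi * n / L ≠ 0 :=
    div_ne_zero (mul_ne_zero (mul_ne_zero two_ne_zero Real.pi_ne_zero)
      (Int.cast_ne_zero.mpr hn)) hL.ne'
  exact pow_two_pos_of_ne_zero h

private lemma ksEigen_rpow {L : ℝ} (hL : 0 < L) (n : ℤ) (p : ℝ) :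
    ksEigen L n ^ p = ((2 * Real.pi / L) ^ 2) ^ p * |(n : ℝ)| ^ (2 * p) := by
  rw [ksEigen_eq, Real.mul_rpow (sq_nonneg _) (sq_nonneg _)]
  congr 1
  rw [← Real.rpow_natCast |(n:ℝ)| 2, ← Real.rpow_mul (abs_nonneg _)]
  norm_num

private lemma summable_ksEigen_rpow {L : ℝ} (hL : 0 < L) {p : ℝ} (hp : 2 * p < -1) :
    Summable fun n : ℤ => ksEigen L n ^ p := by
  have h : ∀ n : ℤ, ksEigen L n ^ p = ((2 * Real.pi / L) ^ 2) ^ p * |(n : ℝ)| ^ (2 * p) :=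
    fun n => ksEigen_rpow hL n p
  simp only [h]
  apply Summable.mul_left
  apply Summable.of_nat_of_neg <;>
  · simp only [Int.cast_natCast, Int.cast_neg, abs_neg, Nat.abs_cast]
    exact Real.summable_nat_rpow.mpr hp

private lemma rpow_add_le (s : ℝ) (hs : 0 ≤ s) {x y : ℝ} (hx : 0 ≤ x) (hy : 0 ≤ y) :
    (x + y) ^ s ≤ 2 ^ s * (x ^ s + y ^ s) := by
  have hmax : x + y ≤ 2 * max x y := by
    rcases le_total x y with h | h
    · rw [max_eq_right h]; linarith
    · rw [max_eq_left h]; linarith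
  calc (x + y) ^ s ≤ (2 * max x y) ^ s := Real.rpow_le_rpow (by linarith) hmax hs
    _ = 2 ^ s * (max x y) ^ s := Real.mul_rpow (by norm_num) (le_max_iff.mpr (Or.inl hx))
    _ ≤ 2 ^ s * (x ^ s + y ^ s) := by
        refine mul_le_mul_of_nonneg_left ?_ (Real.rpow_nonneg (by norm_num) s)
        rcases le_total x y with h | h
        · rw [max_eq_right h]; linarith [Real.rpow_nonneg hx s]
        · rw [max_eq_left h]; linarith [Real.rpow_nonneg hy s]

/-- Key pointwise estimate: `λ_n^{s/2} ≤ 2^s (λ_k^{s/2} + λ_{n-k}^{s/2})`. -/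
private lemma ksEigen_rpow_le {L : ℝ} (hL : 0 < L) {s : ℝ} (hs : 0 ≤ s) (n k : ℤ) :
    ksEigen L n ^ (s / 2) ≤
      2 ^ s * (ksEigen L k ^ (s / 2) + ksEigen L (n - k) ^ (s / 2)) := by
  have h2 : 2 * (s / 2) = s := by ring
  rw [ksEigen_rpow hL, ksEigen_rpow hL, ksEigen_rpow hL, h2]
  set c0 := ((2 * Real.pi / L) ^ 2) ^ (s / 2) with hc0
  have hc0n : 0 ≤ c0 := Real.rpow_nonneg (sq_nonneg _) _
  have habs : |(n : ℝ)| ≤ |(k : ℝ)| + |((n - k : ℤ) : ℝ)| := by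
    push_cast
    calc |(n : ℝ)| = |(k : ℝ) + ((n : ℝ) - k)| := by ring_nf
      _ ≤ |(k : ℝ)| + |(n : ℝ) - k| := abs_add_le _ _
  have h1 : |(n : ℝ)| ^ s ≤ (|(k : ℝ)| + |((n - k : ℤ) : ℝ)|) ^ s :=
    Real.rpow_le_rpow (abs_nonneg _) habs hs
  have h2' := rpow_add_le s hs (abs_nonneg ((k : ℝ))) (abs_nonneg (((n - k : ℤ) : ℝ)))
  calc c0 * |(n : ℝ)| ^ s ≤ c0 * (2 ^ s * (|(k : ℝ)| ^ s + |((n - k : ℤ) : ℝ)| ^ s)) :=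
        mul_le_mul_of_nonneg_left (h1.trans h2') hc0n
    _ = 2 ^ s * (c0 * |(k : ℝ)| ^ s + c0 * |((n - k : ℤ) : ℝ)| ^ s) := by ring

/-- The estimate `|A^{-γ} B(v,v)| ≤ C |A^{1/2-γ} v|²` in Fourier form,
for `γ < 0`. -/
theorem ksB_estimate_low (L γ : ℝ) (hL : 0 < L) (hγ : γ < 0) :
    ∃ C : ℝ, ∀ v : ℤ → ℂ, v 0 = 0 →
      Summable (fun n : ℤ => ksEigen L n ^ (1 - 2 * γ) * ‖v n‖ ^ 2) →
      (∀ n : ℤ, Summable (fun k : ℤ => ‖v k * v (n - k)‖)) ∧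
      Summable (fun n : ℤ => ksEigen L n ^ (-(2 * γ)) * ‖ksB L v n‖ ^ 2) ∧
      ∑' n : ℤ, ksEigen L n ^ (-(2 * γ)) * ‖ksB L v n‖ ^ 2 ≤
        C * (∑' k : ℤ, ksEigen L k ^ (1 - 2 * γ) * ‖v k‖ ^ 2) ^ 2 := by
  set s : ℝ := 1 - 2 * γ with hs_def
  have hs1 : 1 < s := by simp only [hs_def]; linarith
  have hs0 : 0 ≤ s := by linarith
  have hsum_neg : Summable fun k : ℤ => ksEigen L k ^ (-s) :=
    summable_ksEigen_rpow hL (by linarith)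
  set M : ℝ := ∑' k : ℤ, ksEigen L k ^ (-s) with hM_def
  have hM0 : 0 ≤ M := tsum_nonneg fun k => Real.rpow_nonneg (ksEigen_nonneg L k) _
  refine ⟨(4 : ℝ) ^ s * M, ?_⟩
  intro v hv0 hsumE
  set b : ℤ → ℝ := fun n => ‖v n‖ with hb_def
  have hb0 : ∀ n, 0 ≤ b n := fun n => norm_nonneg _
  have hsE : Summable (fun n : ℤ => ksEigen L n ^ s * b n ^ 2) := hsumE
  set S : ℝ := ∑' k : ℤ, ksEigen L k ^ s * ‖v k‖ ^ 2 with hS_def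
  have hSb_eq : S = ∑' k : ℤ, ksEigen L k ^ s * b k ^ 2 := rfl
  have hS0 : 0 ≤ S := tsum_nonneg fun k =>
    mul_nonneg (Real.rpow_nonneg (ksEigen_nonneg L k) _) (sq_nonneg _)
  -- the weighted sequence a
  set a : ℤ → ℝ := fun n => ksEigen L n ^ (s / 2) * b n with ha_def
  have ha0 : ∀ n, 0 ≤ a n := fun n =>
    mul_nonneg (Real.rpow_nonneg (ksEigen_nonneg L n) _) (hb0 n)
  have hhalf : s / 2 * 2 = s := div_mul_cancel₀ s two_ne_zero
  have ha_sq : ∀ n, a n ^ 2 = ksEigen L n ^ s * b n ^ 2 := by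
    intro n
    simp only [ha_def, mul_pow, rpow_sq_eq (ksEigen_nonneg L n), hhalf]
  have ha2_sum : Summable (fun n => a n ^ 2) := by
    simp only [ha_sq]; exact hsE
  have ha2_tsum : ∑' n, a n ^ 2 = S := by
    rw [hSb_eq]; exact tsum_congr ha_sq
  -- ℓ¹ bound on b via Cauchy-Schwarz
  have hcs1 := tsum_cs (f := fun k => ksEigen L k ^ (-(s / 2))) (g := a)
    (fun k => Real.rpow_nonneg (ksEigen_nonneg L k) _) ha0
    (by
      have : ∀ k : ℤ, (ksEigen L k ^ (-(s / 2))) ^ 2 = ksEigen L k ^ (-s) := by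
        intro k
        rw [rpow_sq_eq (ksEigen_nonneg L k)]
        norm_num [hhalf]
      simp only [this]; exact hsum_neg)
    ha2_sum
  have hfg_eq_b : ∀ k : ℤ, ksEigen L k ^ (-(s / 2)) * a k = b k := by
    intro k
    by_cases hk : k = 0
    · subst hk
      simp only [ha_def, hb_def, hv0, norm_zero, mul_zero]
    · have hpos := ksEigen_pos hL hk
      simp only [ha_def]
      rw [← mul_assoc, ← Real.rpow_add hpos]
      norm_num
  have hb_sum : Summable b := by
    have := hcs1.1
    simpa only [hfg_eq_b] using this
  set Sb : ℝ := ∑' k, b k with hSb_def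
  have hSb0 : 0 ≤ Sb := tsum_nonneg hb0
  have hSb_sq : Sb ^ 2 ≤ M * S := by
    have h := hcs1.2
    rw [show (∑' i, ksEigen L i ^ (-(s / 2)) * a i) = Sb from tsum_congr hfg_eq_b] at h
    rw [show (∑' i, (ksEigen L i ^ (-(s / 2))) ^ 2) = M by
      refine tsum_congr fun k => ?_
      rw [rpow_sq_eq (ksEigen_nonneg L k)]
      norm_num [hhalf]] at h
    rw [ha2_tsum] at h
    exact h
  have hb_le : ∀ k, b k ≤ Sb := fun k => Summable.le_tsum hb_sum k fun j _ => hb0 j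
  -- bullet 1
  have h1 : ∀ n : ℤ, Summable fun k : ℤ => ‖v k * v (n - k)‖ := by
    intro n
    have heq : ∀ k : ℤ, ‖v k * v (n - k)‖ = b k * b (n - k) := fun k => norm_mul _ _
    refine Summable.of_nonneg_of_le (fun k => norm_nonneg _) (fun k => ?_)
      (hb_sum.mul_right Sb)
    rw [heq]
    exact mul_le_mul_of_nonneg_left (hb_le _) (hb0 k)
  -- shifted summability
  have hb_shift : ∀ n : ℤ, Summable fun k => b (n - k) := by
    intro n
    exact hb_sum.comp_injective (sub_right_injective)
  have hb_shift_tsum : ∀ n : ℤ, ∑' k, b (n - k) = Sb := by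
    intro n
    exact (Equiv.subLeft n).tsum_eq b
  -- the product function F and Tonelli
  set F : ℤ × ℤ → ℝ := fun p => ksEigen L p.1 ^ s * b p.1 ^ 2 * b (p.2 - p.1) with hF_def
  have hF0 : ∀ p, 0 ≤ F p := fun p =>
    mul_nonneg (mul_nonneg (Real.rpow_nonneg (ksEigen_nonneg L p.1) _) (sq_nonneg _))
      (hb0 _)
  have hG : Summable fun p : ℤ × ℤ => (ksEigen L p.1 ^ s * b p.1 ^ 2) * b p.2 :=
    hsE.mul_of_nonneg hb_sum
      (fun n => mul_nonneg (Real.rpow_nonneg (ksEigen_nonneg L n) _) (sq_nonneg _))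
      hb0
  have hF : Summable F := by
    let e : ℤ × ℤ ≃ ℤ × ℤ :=
      { toFun := fun p => (p.1, p.2 + p.1)
        invFun := fun p => (p.1, p.2 - p.1)
        left_inv := fun p => by simp
        right_inv := fun p => by simp }
    have he : (F ∘ e) = fun p : ℤ × ℤ => (ksEigen L p.1 ^ s * b p.1 ^ 2) * b p.2 := by
      funext p
      simp only [Function.comp_apply, hF_def, e, Equiv.coe_fn_mk, add_sub_cancel_right]
    exact e.summable_iff.mp (by rw [he]; exact hG)
  set U : ℤ → ℝ := fun n => ∑' k, F (k, n) with hU_def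
  have hU0 : ∀ n, 0 ≤ U n := fun n => tsum_nonneg fun k => hF0 _
  have hU_sum : Summable U := hF.prod_symm.prod
  have hU_tsum : ∑' n, U n = S * Sb := by
    have h1' : ∑' n, U n = ∑' p : ℤ × ℤ, F p.swap := by
      rw [Summable.tsum_prod' hF.prod_symm (fun n => hF.prod_symm.prod_factor n)]
      rfl
    have h2' : ∑' p : ℤ × ℤ, F p.swap = ∑' p : ℤ × ℤ, F p :=
      (Equiv.prodComm ℤ ℤ).tsum_eq F
    have h3' : ∑' p : ℤ × ℤ, F p = ∑' k, ∑' n, F (k, n) :=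
      Summable.tsum_prod' hF fun k => hF.prod_factor k
    have h4' : ∀ k : ℤ, ∑' n, F (k, n) = ksEigen L k ^ s * b k ^ 2 * Sb := by
      intro k
      simp only [hF_def]
      rw [tsum_mul_left]
      congr 1
      exact (Equiv.subRight k).tsum_eq b
    rw [h1', h2', h3']
    rw [tsum_congr h4', tsum_mul_right, hSb_eq]
  -- per-n convolution bounds
  have hW_all : ∀ n : ℤ, Summable (fun k => a k * b (n - k)) ∧
      (∑' k, a k * b (n - k)) ^ 2 ≤ Sb * U n := by
    intro n
    have hcs := tsum_cs (f := fun k => Real.sqrt (b (n - k)))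
      (g := fun k => a k * Real.sqrt (b (n - k)))
      (fun k => Real.sqrt_nonneg _)
      (fun k => mul_nonneg (ha0 k) (Real.sqrt_nonneg _))
      (by
        have : ∀ k : ℤ, Real.sqrt (b (n - k)) ^ 2 = b (n - k) := fun k =>
          Real.sq_sqrt (hb0 _)
        simp only [this]; exact hb_shift n)
      (by
        have heq : ∀ k : ℤ, (a k * Real.sqrt (b (n - k))) ^ 2 = F (k, n) := by
          intro k
          rw [mul_pow, Real.sq_sqrt (hb0 _), ha_sq]
        simp only [heq]
        refine Summable.of_nonneg_of_le (fun k => hF0 _) (fun k => ?_) (hsE.mul_right Sb)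
        simp only [hF_def]
        exact mul_le_mul_of_nonneg_left (hb_le _)
          (mul_nonneg (Real.rpow_nonneg (ksEigen_nonneg L k) _) (sq_nonneg _)))
    have hprod : ∀ k : ℤ, Real.sqrt (b (n - k)) * (a k * Real.sqrt (b (n - k))) =
        a k * b (n - k) := by
      intro k
      rw [show Real.sqrt (b (n - k)) * (a k * Real.sqrt (b (n - k))) =
        a k * (Real.sqrt (b (n - k)) * Real.sqrt (b (n - k))) by ring,
        Real.mul_self_sqrt (hb0 _)]
    constructor
    · have := hcs.1
      simpa only [hprod] using this
    · have h := hcs.2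
      rw [show (∑' k, Real.sqrt (b (n - k)) * (a k * Real.sqrt (b (n - k)))) =
          ∑' k, a k * b (n - k) from tsum_congr hprod] at h
      rw [show (∑' k, Real.sqrt (b (n - k)) ^ 2) = Sb by
        rw [show (fun k => Real.sqrt (b (n - k)) ^ 2) = fun k => b (n - k) from
          funext fun k => Real.sq_sqrt (hb0 _)]
        exact hb_shift_tsum n] at h
      rw [show (∑' k, (a k * Real.sqrt (b (n - k))) ^ 2) = U n by
        refine tsum_congr fun k => ?_
        rw [mul_pow, Real.sq_sqrt (hb0 _), ha_sq]] at h
      exact h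
  set W : ℤ → ℝ := fun n => ∑' k, a k * b (n - k) with hW_def
  have hW0 : ∀ n, 0 ≤ W n := fun n => tsum_nonneg fun k => mul_nonneg (ha0 k) (hb0 _)
  -- main pointwise bound
  have hterm : ∀ n : ℤ,
      ksEigen L n ^ (-(2 * γ)) * ‖ksB L v n‖ ^ 2 ≤ 4 ^ s * Sb * U n := by
    intro n
    have hrhs0 : 0 ≤ 4 ^ s * Sb * U n :=
      mul_nonneg (mul_nonneg (Real.rpow_nonneg (by norm_num) s) hSb0) (hU0 n)
    by_cases hn : n = 0
    · subst hn
      have : ksEigen L 0 = 0 := by unfold ksEigen; norm_num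
      rw [this, Real.zero_rpow (by intro h; simp at h; linarith : -(2 * γ) ≠ 0), zero_mul]
      exact hrhs0
    · have hlam : 0 < ksEigen L n := ksEigen_pos hL hn
      set T : ℝ := ∑' k, b k * b (n - k) with hT_def
      have hT_sum : Summable fun k => b k * b (n - k) := by
        have := h1 n
        simpa only [norm_mul] using this
      have hT0 : 0 ≤ T := tsum_nonneg fun k => mul_nonneg (hb0 k) (hb0 _)
      -- norm bound on ksB
      have hnorm : ‖ksB L v n‖ ≤ Real.pi * |(n : ℝ)| / L * T := by
        unfold ksB
        rw [norm_mul]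
        have hfac : ‖(Real.pi : ℂ) * Complex.I * (n : ℂ) / (L : ℂ)‖ =
            Real.pi * |(n : ℝ)| / L := by
          rw [norm_div, norm_mul, norm_mul,
            show ((n : ℤ) : ℂ) = ((n : ℝ) : ℂ) by push_cast; ring]
          simp [Complex.norm_real, Complex.norm_I, Real.norm_eq_abs,
            abs_of_pos Real.pi_pos, abs_of_pos hL]
        rw [hfac]
        refine mul_le_mul_of_nonneg_left ?_
          (by positivity)
        calc ‖∑' k, v k * v (n - k)‖ ≤ ∑' k, ‖v k * v (n - k)‖ :=
              norm_tsum_le_tsum_norm (h1 n)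
          _ = T := by rw [hT_def]; exact tsum_congr fun k => norm_mul _ _
      have hnorm2 : ‖ksB L v n‖ ^ 2 ≤ ksEigen L n / 4 * T ^ 2 := by
        have hfac2 : (Real.pi * |(n : ℝ)| / L) ^ 2 = ksEigen L n / 4 := by
          unfold ksEigen
          rw [div_pow, div_pow, mul_pow, sq_abs]
          ring
        calc ‖ksB L v n‖ ^ 2 ≤ (Real.pi * |(n : ℝ)| / L * T) ^ 2 :=
              pow_le_pow_left₀ (norm_nonneg _) hnorm 2
          _ = ksEigen L n / 4 * T ^ 2 := by rw [mul_pow, hfac2]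
      -- convolution estimate
      have hWsum := (hW_all n).1
      have hW'sum : Summable fun k => b k * a (n - k) := by
        have h := hWsum.comp_injective (Equiv.subLeft n).injective
        exact h.congr fun k => by
          simp only [Function.comp_apply, Equiv.subLeft_apply, sub_sub_cancel]
          ring
      have hconv : ksEigen L n ^ (s / 2) * T ≤ 2 ^ s * (2 * W n) := by
        have hstep : ∀ k : ℤ, ksEigen L n ^ (s / 2) * (b k * b (n - k)) ≤
            2 ^ s * (a k * b (n - k) + b k * a (n - k)) := by
          intro k
          have hkey := ksEigen_rpow_le hL hs0 n k
          have hbb : 0 ≤ b k * b (n - k) := mul_nonneg (hb0 k) (hb0 _)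
          calc ksEigen L n ^ (s / 2) * (b k * b (n - k)) ≤
              2 ^ s * (ksEigen L k ^ (s / 2) + ksEigen L (n - k) ^ (s / 2)) *
                (b k * b (n - k)) := mul_le_mul_of_nonneg_right hkey hbb
            _ = 2 ^ s * (a k * b (n - k) + b k * a (n - k)) := by
                simp only [ha_def]; ring
        have hlhs_sum : Summable fun k => ksEigen L n ^ (s / 2) * (b k * b (n - k)) :=
          hT_sum.mul_left _
        have hrhs_sum : Summable fun k => 2 ^ s * (a k * b (n - k) + b k * a (n - k)) :=
          ((hWsum.add hW'sum).mul_left _)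
        calc ksEigen L n ^ (s / 2) * T = ∑' k, ksEigen L n ^ (s / 2) * (b k * b (n - k)) := by
              rw [hT_def, tsum_mul_left]
          _ ≤ ∑' k, 2 ^ s * (a k * b (n - k) + b k * a (n - k)) :=
              Summable.tsum_le_tsum hstep hlhs_sum hrhs_sum
          _ = 2 ^ s * ((∑' k, a k * b (n - k)) + ∑' k, b k * a (n - k)) := by
              rw [tsum_mul_left, Summable.tsum_add hWsum hW'sum]
          _ = 2 ^ s * (2 * W n) := by
              have hWn : (∑' k, b k * a (n - k)) = W n := by
                have h := (Equiv.subLeft n).tsum_eq (fun k => a k * b (n - k))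
                simp only [Equiv.subLeft_apply, sub_sub_cancel] at h
                rw [show W n = ∑' k, a k * b (n - k) from rfl, ← h]
                exact tsum_congr fun k => by ring
              rw [hWn, show (∑' k, a k * b (n - k)) = W n from rfl]
              ring
      -- put it together
      have hsq : ksEigen L n ^ s * T ^ 2 ≤ 4 ^ s * (4 * W n ^ 2) := by
        have hl0 : 0 ≤ ksEigen L n ^ (s / 2) * T :=
          mul_nonneg (Real.rpow_nonneg hlam.le _) hT0
        have h := pow_le_pow_left₀ hl0 hconv 2
        have hlsq : (ksEigen L n ^ (s / 2) * T) ^ 2 = ksEigen L n ^ s * T ^ 2 := by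
          rw [mul_pow, rpow_sq_eq hlam.le, hhalf]
        have hrsq : (2 ^ s * (2 * W n)) ^ 2 = 4 ^ s * (4 * W n ^ 2) := by
          rw [mul_pow, mul_pow, rpow_sq_eq (by norm_num : (0:ℝ) ≤ 2)]
          rw [show (2:ℝ) ^ (s * 2) = 4 ^ s by
            rw [show (4:ℝ) = (2:ℝ) ^ (2:ℕ) by norm_num, ← Real.rpow_natCast ((2:ℝ)) 2,
              ← Real.rpow_mul (by norm_num : (0:ℝ) ≤ 2)]
            norm_num [mul_comm]]
          norm_num
        rw [hlsq, hrsq] at h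
        exact h
      have hlams : ksEigen L n ^ (-(2 * γ)) * ksEigen L n = ksEigen L n ^ s := by
        rw [show ksEigen L n ^ s = ksEigen L n ^ (-(2 * γ) + 1) by
          congr 1; rw [hs_def]; ring]
        rw [Real.rpow_add hlam, Real.rpow_one]
      calc ksEigen L n ^ (-(2 * γ)) * ‖ksB L v n‖ ^ 2 ≤
            ksEigen L n ^ (-(2 * γ)) * (ksEigen L n / 4 * T ^ 2) :=
            mul_le_mul_of_nonneg_left hnorm2 (Real.rpow_nonneg hlam.le _)
        _ = ksEigen L n ^ s * T ^ 2 / 4 := by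
            rw [show ksEigen L n ^ (-(2 * γ)) * (ksEigen L n / 4 * T ^ 2) =
              ksEigen L n ^ (-(2 * γ)) * ksEigen L n * T ^ 2 / 4 by ring, hlams]
        _ ≤ 4 ^ s * (4 * W n ^ 2) / 4 := by linarith
        _ = 4 ^ s * W n ^ 2 := by ring
        _ ≤ 4 ^ s * (Sb * U n) :=
            mul_le_mul_of_nonneg_left (hW_all n).2 (Real.rpow_nonneg (by norm_num) s)
        _ = 4 ^ s * Sb * U n := by ring
  -- summability of the main series
  have hterm0 : ∀ n : ℤ, 0 ≤ ksEigen L n ^ (-(2 * γ)) * ‖ksB L v n‖ ^ 2 := fun n =>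
    mul_nonneg (Real.rpow_nonneg (ksEigen_nonneg L n) _) (sq_nonneg _)
  have hUsum' : Summable fun n => 4 ^ s * Sb * U n := hU_sum.mul_left _
  have hterm_sum : Summable fun n : ℤ => ksEigen L n ^ (-(2 * γ)) * ‖ksB L v n‖ ^ 2 :=
    Summable.of_nonneg_of_le hterm0 hterm hUsum'
  refine ⟨h1, hterm_sum, ?_⟩
  calc ∑' n : ℤ, ksEigen L n ^ (-(2 * γ)) * ‖ksB L v n‖ ^ 2 ≤
        ∑' n, 4 ^ s * Sb * U n := Summable.tsum_le_tsum hterm hterm_sum hUsum'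
    _ = 4 ^ s * Sb * (S * Sb) := by rw [tsum_mul_left, hU_tsum]
    _ ≤ 4 ^ s * M * S ^ 2 := by
        have h4s : (0:ℝ) ≤ 4 ^ s := Real.rpow_nonneg (by norm_num) s
        nlinarith [mul_le_mul_of_nonneg_left hSb_sq (mul_nonneg h4s hS0)]
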